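/- Let Q be a finite quiver with at least one arrow which is strongly connected, i.e. for any ordered pair of vertices i, j there exists a path in Q from i to j. Suppose there exists ν ∈ ℕ^{Q₁} such that the weight of every cycle in Q is a non-negative integer multiple of ν. Then every vertex of Q has exactly one outgoing arrow and exactly one incoming arrow; in other words, Q is a single oriented cycle. -/

import Mathlib

/-!
Closing an arrow `a` into a cycle shows `ν a > 0`, so every nonempty cycle, being a positive
multiple of `ν`, passes through every arrow. Given a nonempty cycle at `i` and an arrow `a` out
of `i`, the part of the cycle before the first occurrence of `a` is a cycle at `i` avoiding `a`,
hence empty: every arrow out of `i` is the first arrow of that cycle. Incoming arrows are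
handled by the same argument in the opposite quiver.
-/

namespace QuiverPaper

variable {V A : Type}

/-- `IsPathFrom s t i j p`: the list of arrows `p` is a path from `i` to `j`
in the quiver with source map `s` and target map `t`. -/
def IsPathFrom (s t : A → V) : V → V → List A → Prop
  | i, j, [] => i = j
  | i, j, a :: p => s a = i ∧ IsPathFrom s t (t a) j p

def IsStronglyConnected (s t : A → V) : Prop :=
  ∀ i j : V, ∃ p : List A, IsPathFrom s t i j p

def CycleWeightsMultipleOf [DecidableEq A] (s t : A → V) (ν : A → ℕ) : Prop :=
  ∀ (i : V) (p : List A), IsPathFrom s t i i p → ∃ k : ℕ, ∀ a : A, p.count a = k * ν a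

theorem _root_.List.exists_eq_append_cons_notMem {α : Type*} {a : α} {l : List α} (h : a ∈ l) :
    ∃ u v, l = u ++ a :: v ∧ a ∉ u := by
  induction l with
  | nil => cases h
  | cons b l ih =>
    by_cases hb : b = a
    · exact ⟨[], l, by rw [hb]; rfl, List.not_mem_nil⟩
    · obtain ⟨u, v, rfl, hu⟩ := ih (List.mem_of_ne_of_mem (Ne.symm hb) h)
      exact ⟨b :: u, v, rfl, by simp [hu, Ne.symm hb]⟩

section Paths

variable {s t : A → V}

theorem IsPathFrom.append {i m j : V} {u v : List A} (hu : IsPathFrom s t i m u)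
    (hv : IsPathFrom s t m j v) : IsPathFrom s t i j (u ++ v) := by
  induction u generalizing i with
  | nil => cases hu; exact hv
  | cons a u ih => exact ⟨hu.1, ih hu.2⟩

theorem IsPathFrom.of_append {i j : V} {u v : List A} (h : IsPathFrom s t i j (u ++ v)) :
    ∃ m, IsPathFrom s t i m u ∧ IsPathFrom s t m j v := by
  induction u generalizing i with
  | nil => exact ⟨i, rfl, h⟩
  | cons a u ih =>
    obtain ⟨m, hu, hv⟩ := ih h.2
    exact ⟨m, ⟨h.1, hu⟩, hv⟩

theorem IsPathFrom.reverse {i j : V} {p : List A} (hp : IsPathFrom s t i j p) :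
    IsPathFrom t s j i p.reverse := by
  induction p generalizing i with
  | nil => exact hp.symm
  | cons a p ih =>
    rw [List.reverse_cons]
    exact (ih hp.2).append ⟨rfl, hp.1⟩

theorem IsStronglyConnected.swap (hsc : IsStronglyConnected s t) : IsStronglyConnected t s :=
  fun i j =>
    let ⟨p, hp⟩ := hsc j i
    ⟨p.reverse, hp.reverse⟩

theorem exists_isPathFrom_self_ne_nil (harrow : Nonempty A) (hsc : IsStronglyConnected s t)
    (i : V) :
    ∃ p : List A, IsPathFrom s t i i p ∧ p ≠ [] := by
  obtain ⟨a⟩ := harrow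
  obtain ⟨p, hp⟩ := hsc i (s a)
  obtain ⟨q, hq⟩ := hsc (t a) i
  exact ⟨p ++ a :: q, hp.append ⟨rfl, hq⟩, by simp⟩

end Paths

section CycleWeights

variable [DecidableEq A] {s t : A → V} {ν : A → ℕ}

theorem CycleWeightsMultipleOf.swap (hν : CycleWeightsMultipleOf s t ν) :
    CycleWeightsMultipleOf t s ν := fun i p hp => by
  simpa only [List.count_reverse] using hν i p.reverse hp.reverse

theorem weight_pos (hsc : IsStronglyConnected s t) (hν : CycleWeightsMultipleOf s t ν)
    (a : A) : 0 < ν a := by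
  obtain ⟨q, hq⟩ := hsc (t a) (s a)
  obtain ⟨k, hk⟩ := hν (s a) (a :: q) ⟨rfl, hq⟩
  have hcount : 0 < (a :: q).count a := List.count_pos_iff.2 List.mem_cons_self
  rw [hk a] at hcount
  exact Nat.pos_of_mul_pos_left hcount

theorem mem_of_isPathFrom_self (hsc : IsStronglyConnected s t) (hν : CycleWeightsMultipleOf s t ν)
    {i : V} {p : List A} (hp : IsPathFrom s t i i p) (hne : p ≠ []) (a : A) : a ∈ p := by
  obtain ⟨k, hk⟩ := hν i p hp
  obtain ⟨b, hb⟩ := List.exists_mem_of_ne_nil p hne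
  have hk_pos : 0 < k := by
    have hcount := List.count_pos_iff.2 hb
    rw [hk b] at hcount
    exact Nat.pos_of_mul_pos_right hcount
  rw [← List.count_pos_iff, hk a]
  exact Nat.mul_pos hk_pos (weight_pos hsc hν a)

theorem eq_cons_of_isPathFrom_self (hsc : IsStronglyConnected s t)
    (hν : CycleWeightsMultipleOf s t ν) {i : V} {p : List A} (hp : IsPathFrom s t i i p)
    (hne : p ≠ []) {a : A} (ha : s a = i) : ∃ v, p = a :: v := by
  obtain ⟨u, v, rfl, ha_u⟩ :=
    List.exists_eq_append_cons_notMem (mem_of_isPathFrom_self hsc hν hp hne a)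
  obtain ⟨m, hu, hav⟩ := hp.of_append
  have hu_cycle : IsPathFrom s t i i u := by rwa [← hav.1, ha] at hu
  have hu_nil : u = [] := by
    by_contra hu_ne
    exact ha_u (mem_of_isPathFrom_self hsc hν hu_cycle hu_ne a)
  exact ⟨v, by rw [hu_nil, List.nil_append]⟩

theorem existsUnique_source_eq (harrow : Nonempty A) (hsc : IsStronglyConnected s t)
    (hν : CycleWeightsMultipleOf s t ν) (i : V) : ∃! a : A, s a = i := by
  obtain ⟨p, hp, hne⟩ := exists_isPathFrom_self_ne_nil harrow hsc i
  obtain ⟨b, q, rfl⟩ := List.exists_cons_of_ne_nil hne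
  refine ⟨b, hp.1, fun a ha => ?_⟩
  obtain ⟨v, hv⟩ := eq_cons_of_isPathFrom_self hsc hν hp hne ha
  exact (List.cons_eq_cons.1 hv).1.symm

end CycleWeights

theorem stmt13_general [DecidableEq A] (s t : A → V)
    (harrow : Nonempty A)
    (hsc : ∀ i j : V, ∃ p : List A, IsPathFrom s t i j p)
    (ν : A → ℕ)
    (hν : ∀ (i : V) (p : List A), IsPathFrom s t i i p → ∃ k : ℕ, ∀ a : A, p.count a = k * ν a)
    (i : V) :
    (∃! a : A, s a = i) ∧ (∃! a : A, t a = i) := by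
  have hsc_swap : IsStronglyConnected t s := IsStronglyConnected.swap hsc
  have hν_swap : CycleWeightsMultipleOf t s ν := CycleWeightsMultipleOf.swap hν
  exact ⟨existsUnique_source_eq harrow hsc hν i,
    existsUnique_source_eq harrow hsc_swap hν_swap i⟩

/-- A strongly connected finite quiver with at least one arrow, in
which the weight of every cycle is a non-negative multiple of a fixed `ν ∈ ℕ^{Q₁}`, is a
single oriented cycle: every vertex has exactly one outgoing and one incoming arrow. -/
theorem stmt13 [Fintype V] [Fintype A] [DecidableEq A] (s t : A → V)
    (harrow : Nonempty A)
    (hsc : ∀ i j : V, ∃ p : List A, IsPathFrom s t i j p)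
    (ν : A → ℕ)
    (hν : ∀ (i : V) (p : List A), IsPathFrom s t i i p → ∃ k : ℕ, ∀ a : A, p.count a = k * ν a)
    (i : V) :
    (∃! a : A, s a = i) ∧ (∃! a : A, t a = i) :=
  stmt13_general s t harrow hsc ν hν i

end QuiverPaper
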